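/- Define F(q) = (cos x₃, sin x₃ + w₁, 0, w₂, −w₁) and G(q) = (0, 0, 1, 0, 0) on ℝ⁵, where q = (x₁, x₂, x₃, w₁, w₂), and let λ(q) = x₁² + x₂² − 1. Then for all q ∈ ℝ⁵: L_G λ(q) = 0, L_F λ(q) = 2x₁ cos x₃ + 2x₂(sin x₃ + w₁), and L_G L_F λ(q) = −2ϕ(q), where ϕ(q) = x₁ sin x₃ − x₂ cos x₃. Consequently, at every q with γ(q) = 0 and w₁² + w₂² < 1, λ yields a well-defined relative degree 2 (L_G λ vanishes identically and L_G L_F λ(q) ≠ 0). -/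

import Mathlib

/-- Lie derivative of a scalar function along a vector field. -/
noncomputable def lieD {n : ℕ} (v : (Fin n → ℝ) → (Fin n → ℝ))
    (lam : (Fin n → ℝ) → ℝ) : (Fin n → ℝ) → ℝ :=
  fun x => fderiv ℝ lam x (v x)

/-- `F(q) = (cos x₃, sin x₃ + w₁, 0, w₂, −w₁)` with `q = (x₁, x₂, x₃, w₁, w₂)`. -/
noncomputable def exFu : (Fin 5 → ℝ) → (Fin 5 → ℝ) :=
  fun q => ![Real.cos (q 2), Real.sin (q 2) + q 3, 0, q 4, -(q 3)]

/-- `G(q) = (0, 0, 1, 0, 0)`. -/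
noncomputable def exGu : (Fin 5 → ℝ) → (Fin 5 → ℝ) := fun _ => ![0, 0, 1, 0, 0]

/-- `λ(q) = x₁² + x₂² − 1`. -/
noncomputable def lamU : (Fin 5 → ℝ) → ℝ := fun q => q 0 ^ 2 + q 1 ^ 2 - 1

/-- `γ(q) = (x₁² + x₂² − 1, x₁ cos x₃ + x₂ sin x₃ + x₂ w₁)`. -/
noncomputable def exGam : (Fin 5 → ℝ) → (Fin 2 → ℝ) :=
  fun q => ![q 0 ^ 2 + q 1 ^ 2 - 1,
    q 0 * Real.cos (q 2) + q 1 * Real.sin (q 2) + q 1 * q 3]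

/-- `ϕ(q) = x₁ sin x₃ − x₂ cos x₃`. -/
noncomputable def varphiU (q : Fin 5 → ℝ) : ℝ :=
  q 0 * Real.sin (q 2) - q 1 * Real.cos (q 2)

private lemma hproj (i : Fin 5) (q : Fin 5 → ℝ) : HasFDerivAt (fun p : Fin 5 → ℝ => p i)
    (ContinuousLinearMap.proj (R := ℝ) (φ := fun _ : Fin 5 => ℝ) i) q :=
  hasFDerivAt_apply i q

private lemma hlam (q : Fin 5 → ℝ) : HasFDerivAt lamU
    ((2 * q 0) • ContinuousLinearMap.proj 0
      + (2 * q 1) • ContinuousLinearMap.proj (R := ℝ) (φ := fun _ : Fin 5 => ℝ) 1) q := by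
  have h0 := hproj 0 q
  have h1 := hproj 1 q
  have heq : lamU = fun p : Fin 5 → ℝ => (p 0 * p 0 + p 1 * p 1) - 1 := by
    funext p; simp [lamU]; ring
  rw [heq]
  refine (((h0.mul h0).add (h1.mul h1)).sub_const 1).congr_fderiv ?_
  ext v
  simp [ContinuousLinearMap.proj_apply]
  ring

private lemma part2 (q : Fin 5 → ℝ) : lieD exFu lamU q
    = 2 * q 0 * Real.cos (q 2) + 2 * q 1 * (Real.sin (q 2) + q 3) := by
  simp [lieD, (hlam q).fderiv, exFu]

private lemma hH (q : Fin 5 → ℝ) : HasFDerivAt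
    (fun p : Fin 5 → ℝ => 2 * p 0 * Real.cos (p 2) + 2 * p 1 * (Real.sin (p 2) + p 3))
    ((2 * Real.cos (q 2)) • ContinuousLinearMap.proj 0
      - (2 * q 0 * Real.sin (q 2)) • ContinuousLinearMap.proj 2
      + (2 * (Real.sin (q 2) + q 3)) • ContinuousLinearMap.proj 1
      + (2 * q 1 * Real.cos (q 2)) • ContinuousLinearMap.proj 2
      + (2 * q 1) • ContinuousLinearMap.proj (R := ℝ) (φ := fun _ : Fin 5 => ℝ) 3) q := by
  have hcos : HasFDerivAt (fun p : Fin 5 → ℝ => Real.cos (p 2))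
      ((-Real.sin (q 2)) • ContinuousLinearMap.proj (R := ℝ) (φ := fun _ : Fin 5 => ℝ) 2) q :=
    by have := (Real.hasDerivAt_cos (q 2)).comp_hasFDerivAt q (hproj 2 q); exact this
  have hsin : HasFDerivAt (fun p : Fin 5 → ℝ => Real.sin (p 2))
      ((Real.cos (q 2)) • ContinuousLinearMap.proj (R := ℝ) (φ := fun _ : Fin 5 => ℝ) 2) q :=
    by have := (Real.hasDerivAt_sin (q 2)).comp_hasFDerivAt q (hproj 2 q); exact this
  have h0 := (hproj 0 q).const_mul (2 : ℝ)
  have h1 := (hproj 1 q).const_mul (2 : ℝ)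
  refine ((h0.mul hcos).add (h1.mul (hsin.add (hproj 3 q)))).congr_fderiv ?_
  ext v
  simp [ContinuousLinearMap.proj_apply]
  ring

private lemma part3 (q : Fin 5 → ℝ) :
    lieD exGu (lieD exFu lamU) q = -2 * varphiU q := by
  have hfun : lieD exFu lamU
      = fun p : Fin 5 → ℝ => 2 * p 0 * Real.cos (p 2) + 2 * p 1 * (Real.sin (p 2) + p 3) :=
    funext part2
  rw [show lieD exGu (lieD exFu lamU) q = fderiv ℝ (lieD exFu lamU) q (exGu q) from rfl,
    hfun, (hH q).fderiv]
  simp [exGu, varphiU]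
  ring

/-- `L_G λ ≡ 0`, `L_F λ = 2x₁ cos x₃ + 2x₂(sin x₃ + w₁)`,
`L_G L_F λ = −2ϕ`; consequently, at every `q` with `γ(q) = 0` and `w₁² + w₂² < 1`,
`λ` yields a well-defined relative degree `2` (`L_G L_F λ (q) ≠ 0`). -/
theorem stmt_18 :
    (∀ q : Fin 5 → ℝ, lieD exGu lamU q = 0) ∧
    (∀ q : Fin 5 → ℝ, lieD exFu lamU q
      = 2 * q 0 * Real.cos (q 2) + 2 * q 1 * (Real.sin (q 2) + q 3)) ∧
    (∀ q : Fin 5 → ℝ, lieD exGu (lieD exFu lamU) q = -2 * varphiU q) ∧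
    (∀ q : Fin 5 → ℝ, exGam q = 0 → (q 3) ^ 2 + (q 4) ^ 2 < 1 →
      lieD exGu (lieD exFu lamU) q ≠ 0) := by
  refine ⟨fun q => ?_, part2, part3, fun q hγ hw => ?_⟩
  · simp [lieD, (hlam q).fderiv, exGu]
  · rw [part3 q]
    have h1 : q 0 ^ 2 + q 1 ^ 2 - 1 = 0 := by
      have := congrFun hγ 0; simpa [exGam] using this
    have h2 : q 0 * Real.cos (q 2) + q 1 * Real.sin (q 2) + q 1 * q 3 = 0 := by
      have := congrFun hγ 1; simpa [exGam] using this
    have hpyth := Real.sin_sq_add_cos_sq (q 2)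
    have hφ : varphiU q ^ 2 = 1 - (q 1 * q 3) ^ 2 := by
      unfold varphiU
      linear_combination (q 0 ^ 2 + q 1 ^ 2) * hpyth + h1 - (q 0 * Real.cos (q 2) + q 1 * Real.sin (q 2) - q 1 * q 3) * h2
    have hq1 : q 1 ^ 2 ≤ 1 := by nlinarith
    have : (q 1 * q 3) ^ 2 < 1 := by nlinarith [sq_nonneg (q 3), sq_nonneg (q 4), sq_nonneg (q 1 * q 3)]
    have hφpos : varphiU q ^ 2 > 0 := by rw [hφ]; linarith
    intro h
    have : varphiU q = 0 := by linarith [mul_left_cancel₀ (show (-2:ℝ) ≠ 0 by norm_num) (by linarith [h] : (-2:ℝ) * varphiU q = -2 * 0)]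
    nlinarith
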